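/- Let E be a k-coloured graph and C a complete, associative collection of squares in E. For every finite path x in E there is a unique C-compatible coloured-graph morphism λ_x: E_{k, q(c(x))} → E such that x traverses λ_x. -/

import Mathlib

namespace Paper


/-- A `k`-coloured (directed) graph. -/
structure ColouredGraph (k : ℕ) where
  V : Type
  E : Type
  r : E → V
  s : E → V
  c : E → Fin k

variable {k : ℕ}

/-- The model grid `E_{k,m}`: vertices `{n ≤ m}`, an edge of colour `i`
from `n + e_i` to `n` whenever `n + e_i ≤ m`. -/
def grid (k : ℕ) (m : Fin k → ℕ) : ColouredGraph k where
  V := {n : Fin k → ℕ // n ≤ m}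
  E := {p : (Fin k → ℕ) × Fin k // p.1 + Pi.single p.2 1 ≤ m}
  r e := ⟨e.1.1, le_trans (le_add_of_nonneg_right zero_le) e.2⟩
  s e := ⟨e.1.1 + Pi.single e.1.2 1, e.2⟩
  c e := e.1.2

/-- A coloured-graph morphism. -/
structure CGM (E F : ColouredGraph k) where
  onV : E.V → F.V
  onE : E.E → F.E
  r_comm : ∀ e, F.r (onE e) = onV (E.r e)
  s_comm : ∀ e, F.s (onE e) = onV (E.s e)
  c_comm : ∀ e, F.c (onE e) = E.c e

/-- Composition of coloured-graph morphisms. -/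
def CGM.compose {E F G : ColouredGraph k} (g : CGM F G) (f : CGM E F) : CGM E G where
  onV := g.onV ∘ f.onV
  onE := g.onE ∘ f.onE
  r_comm e := by simp [Function.comp, g.r_comm, f.r_comm]
  s_comm e := by simp [Function.comp, g.s_comm, f.s_comm]
  c_comm e := by simp [Function.comp, g.c_comm, f.c_comm]

/-- The range `λ(0)` of a coloured-graph morphism defined on a grid. -/
def gRng {E : ColouredGraph k} {m : Fin k → ℕ} (lam : CGM (grid k m) E) : E.V :=
  lam.onV ⟨0, zero_le⟩

/-- The source `λ(m)` of a coloured-graph morphism defined on a grid. -/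
def gSrc {E : ColouredGraph k} {m : Fin k → ℕ} (lam : CGM (grid k m) E) : E.V :=
  lam.onV ⟨m, le_refl m⟩

/-- The translated restriction `λ|*_{[p, p+m']}` of `λ : E_{k,M} → E`. -/
def restrictTo {E : ColouredGraph k} {M : Fin k → ℕ} (lam : CGM (grid k M) E)
    (p m' : Fin k → ℕ) (h : p + m' ≤ M) : CGM (grid k m') E where
  onV n := lam.onV ⟨p + n.1, le_trans (add_le_add (le_refl p) n.2) h⟩
  onE e := lam.onE ⟨(p + e.1.1, e.1.2), by
    rw [add_assoc]; exact le_trans (add_le_add (le_refl p) e.2) h⟩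
  r_comm e := lam.r_comm _
  s_comm e := by
    exact (lam.s_comm _).trans (congrArg lam.onV (Subtype.ext (add_assoc p e.1.1 _)))
  c_comm e := lam.c_comm _

/-- A coloured-graph morphism from some grid into `E`, bundled with its degree. -/
def MorphOf (E : ColouredGraph k) : Type := Σ m : Fin k → ℕ, CGM (grid k m) E

/-- The shape (abelianized colouring) of a finite path, as an element of `ℕ^k`. -/
def colourVec (E : ColouredGraph k) (x : List E.E) : Fin k → ℕ :=
  (x.map (fun e => Pi.single (E.c e) 1)).sum

/-- A list of edges is a path when consecutive edges are composable. -/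
def IsPathList (E : ColouredGraph k) (x : List E.E) : Prop :=
  x.Chain' (fun e f => E.s e = E.r f)

/-- `x` traverses `λ`: the edges of `x` match those of `λ` along the staircase
determined by the colour sequence of `x`. -/
def Traverses {E : ColouredGraph k} {m : Fin k → ℕ} (lam : CGM (grid k m) E)
    (x : List E.E) : Prop :=
  colourVec E x = m ∧ ∀ (l : ℕ) (hl : l < x.length),
    ∃ h : colourVec E (x.take l) + Pi.single (E.c (x.get ⟨l, hl⟩)) 1 ≤ m,
      lam.onE ⟨(colourVec E (x.take l), E.c (x.get ⟨l, hl⟩)), h⟩ = x.get ⟨l, hl⟩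

/-- A bundled grid morphism is a square when its degree is `e_i + e_j` with `i ≠ j`. -/
def IsSquarePair {E : ColouredGraph k} (φ : MorphOf E) : Prop :=
  ∃ i j : Fin k, i ≠ j ∧ φ.1 = Pi.single i 1 + Pi.single j 1

/-- A complete collection of squares. -/
def Complete (E : ColouredGraph k) (C : Set (MorphOf E)) : Prop :=
  (∀ φ ∈ C, IsSquarePair φ) ∧
  ∀ e f : E.E, E.s e = E.r f → E.c e ≠ E.c f →
    ∃! φ : MorphOf E, φ ∈ C ∧ Traverses φ.2 [e, f]

/-- `CRel C e f f' e'` means `ef ∼_C f'e'`: the paths `ef` and `f'e'` traverse a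
common square of `C`, with `f'` of the colour of `f` and `e'` of the colour of `e`. -/
def CRel (E : ColouredGraph k) (C : Set (MorphOf E)) (e f f' e' : E.E) : Prop :=
  E.c f' = E.c f ∧ E.c e' = E.c e ∧
  ∃ φ ∈ C, Traverses φ.2 [e, f] ∧ Traverses φ.2 [f', e']

/-- Associativity of a complete collection of squares. -/
def Associative (E : ColouredGraph k) (C : Set (MorphOf E)) : Prop :=
  ∀ f g h f1 f2 g1 g2 h1 h2 f1' f2' g1' g2' h1' h2' : E.E,
    E.s f = E.r g → E.s g = E.r h →
    E.c f ≠ E.c g → E.c g ≠ E.c h → E.c f ≠ E.c h →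
    CRel E C f g g1' f1' → CRel E C f1' h h1' f2' → CRel E C g1' h1' h2' g2' →
    CRel E C g h h1 g1 → CRel E C f h1 h2 f1 → CRel E C f1 g1 g2 f2 →
    f2 = f2' ∧ g2 = g2' ∧ h2 = h2'

/-- `λ` is `C`-compatible: every square occurring in `λ` belongs to `C`. -/
def CComp (E : ColouredGraph k) (C : Set (MorphOf E)) {M : Fin k → ℕ}
    (lam : CGM (grid k M) E) : Prop :=
  ∀ (p : Fin k → ℕ) (i j : Fin k), i ≠ j →
    ∀ h : p + (Pi.single i 1 + Pi.single j 1) ≤ M,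
      (⟨Pi.single i 1 + Pi.single j 1,
        restrictTo lam p (Pi.single i 1 + Pi.single j 1) h⟩ : MorphOf E) ∈ C

/-- A finite path in a coloured graph, remembering its range vertex (so that
length-zero paths are vertices). -/
structure FinPath (E : ColouredGraph k) where
  rng : E.V
  edges : List E.E
  chain : edges.Chain' (fun e f => E.s e = E.r f)
  head_rng : ∀ e ∈ edges.head?, E.r e = rng

/-- Source vertex of a finite path. -/
def FinPath.src {E : ColouredGraph k} (x : FinPath E) : E.V :=
  (x.edges.getLast?).elim x.rng E.s

/-- One application of a commuting square: replace a consecutive bicoloured pair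
by its `C`-equivalent pair. -/
def SwapStep (E : ColouredGraph k) (C : Set (MorphOf E)) (x y : List E.E) : Prop :=
  ∃ (l r : List E.E) (e f f' e' : E.E),
    x = l ++ e :: f :: r ∧ y = l ++ f' :: e' :: r ∧ CRel E C e f f' e'

/-- The relation on finite paths generating the equivalence `∼`. -/
def PathRel (E : ColouredGraph k) (C : Set (MorphOf E)) (x y : FinPath E) : Prop :=
  x.rng = y.rng ∧ SwapStep E C x.edges y.edges


/-
Induction on the path `x = e x'`, where `λ_{x'}` reappears as the restriction of `λ_x` to the box
above the first edge, i.e. to the points `n` with `n (c e) ≥ 1`. Everything else lies on the slab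
`n (c e) = 0`, and it is forced: pushing `e` across the squares of `C` over the edges of `λ_{x'}`
produces, by completeness, a unique edge of colour `c e` into every slab point, together with the
slab edges of the other colours. This gives uniqueness. For existence we extend `λ_{x'}` by this
push-forward of `e`, reaching each slab point along some monotone path. Associativity is exactly
what makes the result independent of that path and `C`-compatible on the slab: the squares around
each unit cube whose top face lies in `λ_{x'}` close up.
-/

section GridArith

variable {n m p w : Fin k → ℕ} {i j a b c : Fin k}

theorem single_le_iff_ne_zero : Pi.single j 1 ≤ n ↔ n j ≠ 0 := by
  refine ⟨fun h => Nat.one_le_iff_ne_zero.1 (by simpa using h j), fun h l => ?_⟩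
  rw [Pi.single_apply]
  split_ifs with hl
  · exact Nat.one_le_iff_ne_zero.2 (hl ▸ h)
  · exact Nat.zero_le _

theorem sub_single_lt (h : n j ≠ 0) : n - Pi.single j 1 < n :=
  Pi.lt_def.2 ⟨tsub_le_self, j, by simp only [Pi.sub_apply, Pi.single_eq_same]; omega⟩

theorem lt_add_single (p : Fin k → ℕ) (j : Fin k) : p < p + (Pi.single j 1 : Fin k → ℕ) :=
  lt_add_of_pos_right p (by simp)

theorem add_single_ne_zero (n : Fin k → ℕ) (j : Fin k) :
    n + (Pi.single j 1 : Fin k → ℕ) ≠ 0 :=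
  fun h => by simpa using congrFun h j

theorem exists_eq_add_single (h : n j ≠ 0) : ∃ p, n = p + (Pi.single j 1 : Fin k → ℕ) :=
  ⟨n - Pi.single j 1, (tsub_add_cancel_of_le (single_le_iff_ne_zero.2 h)).symm⟩

theorem exists_eq_single_add (h : n j ≠ 0) : ∃ p, n = (Pi.single j 1 : Fin k → ℕ) + p :=
  ⟨n - Pi.single j 1, (add_tsub_cancel_of_le (single_le_iff_ne_zero.2 h)).symm⟩

theorem add_single_apply_eq_zero :
    (p + Pi.single j 1 : Fin k → ℕ) i = 0 ↔ p i = 0 ∧ j ≠ i := by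
  rcases eq_or_ne j i with rfl | hji
  · simp
  · simp [hji]

theorem le_of_le_single_add (h : n ≤ Pi.single i 1 + m) (hn : n i = 0) : n ≤ m := by
  intro l
  rcases eq_or_ne l i with rfl | hl
  · simp [hn]
  · simpa [Pi.single_eq_of_ne hl] using h l

theorem sub_single_add_le (hp : p i ≠ 0) (h : p + n ≤ Pi.single i 1 + m) :
    p - Pi.single i 1 + n ≤ m := by
  rwa [tsub_add_eq_add_tsub (single_le_iff_ne_zero.2 hp), tsub_le_iff_left]

theorem single_add_single_ne (hab : a ≠ b)
    (h : Pi.single i 1 + Pi.single j 1 = (Pi.single a 1 + Pi.single b 1 : Fin k → ℕ)) :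
    i ≠ j := by
  rintro rfl
  have hi := congrFun h i
  simp only [Pi.add_apply, Pi.single_eq_same, Pi.single_apply] at hi
  split_ifs at hi <;> simp_all

theorem eq_zero_or_eq_single_of_le_single (h : w ≤ Pi.single b 1) :
    w = 0 ∨ w = Pi.single b 1 := by
  have hw : w = Pi.single b (w b) := by
    funext l
    rcases eq_or_ne l b with rfl | hl
    · simp
    · simpa [Pi.single_eq_of_ne hl] using h l
  have hb : w b ≤ 1 := by simpa using h b
  interval_cases hwb : w b <;> simp [hw]

theorem square_edge_cases (hab : a ≠ b)
    (h : w + Pi.single c 1 ≤ Pi.single a 1 + Pi.single b 1) :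
    (c = a ∧ (w = 0 ∨ w = Pi.single b 1)) ∨ (c = b ∧ (w = 0 ∨ w = Pi.single a 1)) := by
  have hc : c = a ∨ c = b := by
    by_contra! hc
    simpa [Pi.single_eq_of_ne hc.1, Pi.single_eq_of_ne hc.2] using h c
  rcases hc with rfl | rfl
  · rw [add_comm] at h
    exact Or.inl ⟨rfl, eq_zero_or_eq_single_of_le_single (le_of_add_le_add_left h)⟩
  · exact Or.inr ⟨rfl, eq_zero_or_eq_single_of_le_single (le_of_add_le_add_right h)⟩

variable {M q : Fin k → ℕ}

theorem square_comm_le (h : q + (Pi.single a 1 + Pi.single b 1) ≤ M) :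
    q + (Pi.single b 1 + Pi.single a 1) ≤ M := by
  rwa [add_comm (Pi.single b 1)]

theorem square_fst_le (h : q + (Pi.single a 1 + Pi.single b 1) ≤ M) : q + Pi.single a 1 ≤ M :=
  le_self_add.trans ((add_assoc _ _ _).trans_le h)

theorem square_snd_le (h : q + (Pi.single a 1 + Pi.single b 1) ≤ M) :
    q + Pi.single a 1 + Pi.single b 1 ≤ M :=
  (add_assoc _ _ _).trans_le h

end GridArith

namespace CGM

variable {E : ColouredGraph k} {M : Fin k → ℕ}

theorem ext {F G : ColouredGraph k} {f g : CGM F G} (hV : f.onV = g.onV) (hE : f.onE = g.onE) :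
    f = g := by
  cases f; cases g; cases hV; cases hE; rfl

variable (lam : CGM (grid k M) E)

theorem onV_congr {p p' : Fin k → ℕ} {h h'} (hp : p = p') :
    lam.onV ⟨p, h⟩ = lam.onV ⟨p', h'⟩ := by
  subst hp; rfl

theorem onE_congr {p p' : Fin k → ℕ} {c c' : Fin k} {h h'} (hp : p = p') (hc : c = c') :
    lam.onE ⟨(p, c), h⟩ = lam.onE ⟨(p', c'), h'⟩ := by
  subst hp hc; rfl

variable {p : Fin k → ℕ} {c : Fin k} {h : p + Pi.single c 1 ≤ M}

theorem c_onE : E.c (lam.onE ⟨(p, c), h⟩) = c := lam.c_comm _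

theorem r_onE : E.r (lam.onE ⟨(p, c), h⟩) = lam.onV ⟨p, le_self_add.trans h⟩ := lam.r_comm _

theorem s_onE : E.s (lam.onE ⟨(p, c), h⟩) = lam.onV ⟨p + Pi.single c 1, h⟩ := lam.s_comm _

theorem s_onE_eq_r_onE {c' : Fin k} {h'} :
    E.s (lam.onE ⟨(p, c), h⟩) = E.r (lam.onE ⟨(p + Pi.single c 1, c'), h'⟩) :=
  lam.s_onE.trans lam.r_onE.symm

theorem eq_of_onE_eq {lam mu : CGM (grid k M) E} (hE : lam.onE = mu.onE)
    (h0 : gRng lam = gRng mu) : lam = mu := by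
  refine ext (funext fun ⟨n, hn⟩ => ?_) hE
  by_cases hn0 : n = 0
  · subst hn0; exact h0
  obtain ⟨j, hj⟩ := Function.ne_iff.1 hn0
  obtain ⟨p, rfl⟩ := exists_eq_add_single hj
  calc lam.onV ⟨_, hn⟩ = E.s (lam.onE ⟨(p, j), hn⟩) := lam.s_onE.symm
    _ = E.s (mu.onE ⟨(p, j), hn⟩) := by rw [hE]
    _ = mu.onV ⟨_, hn⟩ := mu.s_onE

end CGM

theorem not_edge_grid_zero (p : (grid k 0).E) : False := by
  obtain ⟨⟨p, c⟩, h⟩ := p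
  simpa using h c

theorem restrictTo_restrictTo {E : ColouredGraph k} {M : Fin k → ℕ} (lam : CGM (grid k M) E)
    {p q m₁ m₂ : Fin k → ℕ} (h₁ : p + m₁ ≤ M) (h₂ : q + m₂ ≤ m₁)
    (h : p + q + m₂ ≤ M) :
    restrictTo (restrictTo lam p m₁ h₁) q m₂ h₂ = restrictTo lam (p + q) m₂ h :=
  CGM.ext (funext fun _ => lam.onV_congr (add_assoc _ _ _).symm)
    (funext fun _ => lam.onE_congr (add_assoc _ _ _).symm rfl)

section Traverses

variable {E : ColouredGraph k} {M : Fin k → ℕ}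

theorem colourVec_cons (a : E.E) (x : List E.E) :
    colourVec E (a :: x) = Pi.single (E.c a) 1 + colourVec E x := by
  simp [colourVec]

theorem traverses_pair_iff (lam : CGM (grid k M) E) (a b : E.E) :
    Traverses lam [a, b] ↔ Pi.single (E.c a) 1 + Pi.single (E.c b) 1 = M ∧
      (∃ h, lam.onE ⟨(0, E.c a), h⟩ = a) ∧
      ∃ h, lam.onE ⟨(Pi.single (E.c a) 1, E.c b), h⟩ = b := by
  simp only [Traverses, colourVec, List.map_cons, List.map_nil, List.sum_cons, List.sum_nil,
    add_zero, List.length_cons, List.length_nil]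
  refine and_congr_right fun _ => ⟨fun h => ⟨?_, ?_⟩, fun ⟨h0, h1⟩ l hl => ?_⟩
  · simpa using h 0 (by omega)
  · simpa [colourVec] using h 1 (by omega)
  · interval_cases l
    · simpa using h0
    · simpa [colourVec] using h1

theorem traverses_cons_iff {m : Fin k → ℕ} (e : E.E) (x : List E.E)
    (lam : CGM (grid k (Pi.single (E.c e) 1 + m)) E) :
    Traverses lam (e :: x) ↔ (∃ h, lam.onE ⟨(0, E.c e), h⟩ = e) ∧
      Traverses (restrictTo lam (Pi.single (E.c e) 1) m le_rfl) x := by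
  simp only [Traverses, colourVec_cons, add_right_inj, List.length_cons]
  constructor
  · rintro ⟨hm, h⟩
    refine ⟨by simpa [colourVec] using h 0 (by omega), hm, fun l hl => ?_⟩
    obtain ⟨hle, he⟩ := h (l + 1) (by omega)
    simp only [List.take_succ_cons, colourVec_cons, add_assoc] at hle he
    exact ⟨le_of_add_le_add_left hle, he⟩
  · rintro ⟨h0, hm, h⟩
    refine ⟨hm, fun l hl => ?_⟩
    cases l with
    | zero => simpa [colourVec] using h0
    | succ l =>
      obtain ⟨hle, he⟩ := h l (by omega)
      simp only [List.take_succ_cons, colourVec_cons, add_assoc]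
      exact ⟨(add_le_add_iff_left _).2 hle, he⟩

variable {lam : CGM (grid k M) E} {a b : E.E}

theorem Traverses.pair_vertices (ht : Traverses lam [a, b]) :
    E.r a = gRng lam ∧ E.s a = E.r b ∧ E.s b = gSrc lam := by
  obtain ⟨hM, ⟨ha, hae⟩, ⟨hb, hbe⟩⟩ := (traverses_pair_iff lam a b).1 ht
  rw [← hae, ← hbe]
  exact ⟨lam.r_onE, lam.s_onE.trans ((lam.onV_congr (zero_add _)).trans lam.r_onE.symm),
    lam.s_onE.trans (lam.onV_congr hM)⟩

theorem Traverses.pair_inj {a' b' : E.E} (ht : Traverses lam [a, b])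
    (ht' : Traverses lam [a', b']) (ha : E.c a = E.c a') (hb : E.c b = E.c b') :
    a = a' ∧ b = b' := by
  obtain ⟨-, ⟨h1, e1⟩, ⟨h2, e2⟩⟩ := (traverses_pair_iff lam a b).1 ht
  obtain ⟨-, ⟨h1', e1'⟩, ⟨h2', e2'⟩⟩ := (traverses_pair_iff lam a' b').1 ht'
  rw [← e1, ← e2, ← e1', ← e2']
  exact ⟨lam.onE_congr rfl ha, lam.onE_congr (by rw [ha]) hb⟩

theorem Traverses.onE_eq {mu : CGM (grid k M) E} {i j : Fin k} (ht : Traverses lam [a, b])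
    (ht' : Traverses mu [a, b]) (ha : E.c a = i) (hb : E.c b = j) :
    (∀ h, lam.onE ⟨(0, i), h⟩ = mu.onE ⟨(0, i), h⟩) ∧
      ∀ h, lam.onE ⟨(Pi.single i 1, j), h⟩ = mu.onE ⟨(Pi.single i 1, j), h⟩ := by
  subst ha hb
  obtain ⟨-, ⟨h1, e1⟩, ⟨h2, e2⟩⟩ := (traverses_pair_iff lam a b).1 ht
  obtain ⟨-, ⟨h1', e1'⟩, ⟨h2', e2'⟩⟩ := (traverses_pair_iff mu a b).1 ht'
  exact ⟨fun _ => e1.trans e1'.symm, fun _ => e2.trans e2'.symm⟩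

theorem traverses_onE_pair (lam : CGM (grid k M) E) {i j : Fin k}
    (hM : Pi.single i 1 + Pi.single j 1 = M) {h1 h2} :
    Traverses lam [lam.onE ⟨(0, i), h1⟩, lam.onE ⟨(Pi.single i 1, j), h2⟩] := by
  simp only [traverses_pair_iff, CGM.c_onE]
  exact ⟨hM, ⟨h1, trivial⟩, ⟨h2, trivial⟩⟩

theorem traverses_restrictTo_pair {d q : Fin k → ℕ} (lam : CGM (grid k M) E) {i j : Fin k}
    (h : q + d ≤ M) (hd : Pi.single i 1 + Pi.single j 1 = d) {h1 h2} :
    Traverses (restrictTo lam q d h)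
      [lam.onE ⟨(q, i), h1⟩, lam.onE ⟨(q + Pi.single i 1, j), h2⟩] := by
  subst hd
  have e1 : (restrictTo lam q _ h).onE ⟨(0, i), by simp⟩ = lam.onE ⟨(q, i), h1⟩ :=
    lam.onE_congr (add_zero q) rfl
  have e2 : (restrictTo lam q _ h).onE ⟨(Pi.single i 1, j), le_rfl⟩ =
      lam.onE ⟨(q + Pi.single i 1, j), h2⟩ := rfl
  rw [← e1, ← e2]
  exact traverses_onE_pair _ rfl

end Traverses

section CRel

variable {E : ColouredGraph k} {C : Set (MorphOf E)} {u v f' e' : E.E}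

theorem CRel.symm (h : CRel E C u v f' e') : CRel E C f' e' u v := by
  obtain ⟨h1, h2, φ, hm, t1, t2⟩ := h
  exact ⟨h2.symm, h1.symm, φ, hm, t2, t1⟩

theorem CRel.s_eq_r_left (h : CRel E C u v f' e') : E.s u = E.r v := by
  obtain ⟨-, -, φ, -, t1, -⟩ := h
  exact t1.pair_vertices.2.1

theorem CRel.s_eq_r (h : CRel E C u v f' e') : E.s f' = E.r e' :=
  h.symm.s_eq_r_left

theorem CRel.r_eq (h : CRel E C u v f' e') : E.r f' = E.r u := by
  obtain ⟨-, -, φ, -, t1, t2⟩ := h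
  exact t2.pair_vertices.1.trans t1.pair_vertices.1.symm

theorem CRel.s_eq (h : CRel E C u v f' e') : E.s e' = E.s v := by
  obtain ⟨-, -, φ, -, t1, t2⟩ := h
  exact t2.pair_vertices.2.2.trans t1.pair_vertices.2.2.symm

theorem exists_crel (hC : Complete E C) (h1 : E.s u = E.r v) (h2 : E.c u ≠ E.c v) :
    ∃ f' e', CRel E C u v f' e' := by
  obtain ⟨⟨d, g⟩, ⟨hg, ht⟩, -⟩ := hC.2 u v h1 h2
  have hd : Pi.single (E.c v) 1 + Pi.single (E.c u) 1 = d :=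
    (add_comm _ _).trans ((traverses_pair_iff g u v).1 ht).1
  exact ⟨g.onE ⟨(0, E.c v), by rw [← hd]; simp⟩,
    g.onE ⟨(Pi.single (E.c v) 1, E.c u), hd.le⟩,
    g.c_onE, g.c_onE, _, hg, ht, traverses_onE_pair g hd⟩

theorem CRel.unique (hC : Complete E C) {f'' e'' : E.E} (h : CRel E C u v f' e')
    (h' : CRel E C u v f'' e'') : f' = f'' ∧ e' = e'' := by
  obtain ⟨hf', he', φ, hφ, t1, t2⟩ := h
  obtain ⟨hf'', he'', ψ, hψ, s1, s2⟩ := h'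
  have huv : E.c u ≠ E.c v := by
    obtain ⟨a, b, hab, hd⟩ := hC.1 φ hφ
    exact single_add_single_ne hab (((traverses_pair_iff _ u v).1 t1).1.trans hd)
  obtain rfl : ψ = φ := (hC.2 u v t1.pair_vertices.2.1 huv).unique ⟨hψ, s1⟩ ⟨hφ, t1⟩
  exact t2.pair_inj s2 (hf'.trans hf''.symm) (he'.trans he''.symm)

end CRel

section Squares

variable {E : ColouredGraph k} {C : Set (MorphOf E)}

theorem square_eq_of_traverses {a b : Fin k} (hab : a ≠ b)
    {g g' : CGM (grid k (Pi.single a 1 + Pi.single b 1)) E} {u v v' u' : E.E}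
    (hu : E.c u = a) (hv : E.c v = b) (hv' : E.c v' = b) (hu' : E.c u' = a)
    (h1 : Traverses g [u, v]) (h1' : Traverses g' [u, v])
    (h2 : Traverses g [v', u']) (h2' : Traverses g' [v', u']) : g = g' := by
  refine CGM.eq_of_onE_eq (funext fun ⟨(w, c), hw⟩ => ?_)
    (h1.pair_vertices.1.symm.trans h1'.pair_vertices.1)
  rcases square_edge_cases hab hw with ⟨rfl, rfl | rfl⟩ | ⟨rfl, rfl | rfl⟩
  · exact (h1.onE_eq h1' hu hv).1 _
  · exact (h2.onE_eq h2' hv' hu').2 _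
  · exact (h2.onE_eq h2' hv' hu').1 _
  · exact (h1.onE_eq h1' hu hv).2 _

variable {M q : Fin k → ℕ} {lam : CGM (grid k M) E} {a b : Fin k}

def SquareCRel (C : Set (MorphOf E)) (lam : CGM (grid k M) E) (q : Fin k → ℕ) (a b : Fin k)
    (h : q + (Pi.single a 1 + Pi.single b 1) ≤ M) : Prop :=
  CRel E C (lam.onE ⟨(q, a), square_fst_le h⟩)
    (lam.onE ⟨(q + Pi.single a 1, b), square_snd_le h⟩)
    (lam.onE ⟨(q, b), square_fst_le (square_comm_le h)⟩)
    (lam.onE ⟨(q + Pi.single b 1, a), square_snd_le (square_comm_le h)⟩)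

theorem squareCRel_of_ccomp (hcc : CComp E C lam) (hab : a ≠ b)
    (h : q + (Pi.single a 1 + Pi.single b 1) ≤ M) : SquareCRel C lam q a b h :=
  ⟨by simp only [CGM.c_onE], by simp only [CGM.c_onE], _, hcc q a b hab h,
    traverses_restrictTo_pair lam h rfl, traverses_restrictTo_pair lam h (add_comm _ _)⟩

theorem restrictTo_mem_of_squareCRel (hab : a ≠ b) (h : q + (Pi.single a 1 + Pi.single b 1) ≤ M)
    (hrel : SquareCRel C lam q a b h) : (⟨_, restrictTo lam q _ h⟩ : MorphOf E) ∈ C := by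
  obtain ⟨-, -, ⟨d, g⟩, hg, t1, t2⟩ := hrel
  obtain rfl : Pi.single a 1 + Pi.single b 1 = d := by
    simpa only [CGM.c_onE] using ((traverses_pair_iff g _ _).1 t1).1
  rwa [square_eq_of_traverses hab lam.c_onE lam.c_onE lam.c_onE lam.c_onE
    (traverses_restrictTo_pair lam h rfl) t1 (traverses_restrictTo_pair lam h (add_comm _ _)) t2]

theorem ccomp_restrictTo {m : Fin k → ℕ} (hcc : CComp E C lam) (h : q + m ≤ M) :
    CComp E C (restrictTo lam q m h) := by
  intro p a b hab hp
  have hqp : q + p + (Pi.single a 1 + Pi.single b 1) ≤ M := by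
    rw [add_assoc]
    exact ((add_le_add_iff_left q).2 hp).trans h
  rw [restrictTo_restrictTo lam h hp hqp]
  exact hcc (q + p) a b hab hqp

end Squares

section Uniqueness

variable {E : ColouredGraph k} {C : Set (MorphOf E)}

theorem onE_eq_of_ccomp (hC : Complete E C) {M : Fin k → ℕ} {lam mu : CGM (grid k M) E}
    (hl : CComp E C lam) (hm : CComp E C mu) {q : Fin k → ℕ} {a b : Fin k} (hab : a ≠ b)
    (h : q + (Pi.single a 1 + Pi.single b 1) ≤ M)
    (ha : lam.onE ⟨(q, a), square_fst_le h⟩ = mu.onE ⟨(q, a), square_fst_le h⟩)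
    (hb : lam.onE ⟨(q + Pi.single a 1, b), square_snd_le h⟩ =
      mu.onE ⟨(q + Pi.single a 1, b), square_snd_le h⟩) :
    (∀ h', lam.onE ⟨(q, b), h'⟩ = mu.onE ⟨(q, b), h'⟩) ∧
      ∀ h', lam.onE ⟨(q + Pi.single b 1, a), h'⟩ =
        mu.onE ⟨(q + Pi.single b 1, a), h'⟩ := by
  have hrel := squareCRel_of_ccomp hm hab h
  rw [SquareCRel, ← ha, ← hb] at hrel
  have := (squareCRel_of_ccomp hl hab h).unique hC hrel
  exact ⟨fun _ => this.1, fun _ => this.2⟩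

variable {i : Fin k} {m : Fin k → ℕ} {lam mu : CGM (grid k (Pi.single i 1 + m)) E}

theorem onE_eq_of_restrictTo_eq
    (hres : restrictTo lam (Pi.single i 1) m le_rfl = restrictTo mu (Pi.single i 1) m le_rfl)
    {p : Fin k → ℕ} {c : Fin k} (hp : p i ≠ 0) (h) :
    lam.onE ⟨(p, c), h⟩ = mu.onE ⟨(p, c), h⟩ := by
  obtain ⟨q, rfl⟩ := exists_eq_single_add hp
  have hq : q + Pi.single c 1 ≤ m := le_of_add_le_add_left (by rwa [← add_assoc])
  exact congrArg (fun g : CGM (grid k m) E => g.onE ⟨(q, c), hq⟩) hres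

theorem onE_eq_of_apply_eq_zero (hC : Complete E C) (hl : CComp E C lam) (hm : CComp E C mu)
    {h0} (h0 : lam.onE ⟨(0, i), h0⟩ = mu.onE ⟨(0, i), h0⟩)
    (hup : ∀ {p : Fin k → ℕ} {c : Fin k}, p i ≠ 0 →
      ∀ h, lam.onE ⟨(p, c), h⟩ = mu.onE ⟨(p, c), h⟩)
    {n : Fin k → ℕ} (hn : n i = 0) (h) : lam.onE ⟨(n, i), h⟩ = mu.onE ⟨(n, i), h⟩ := by
  induction n using WellFoundedLT.induction with
  | _ n IH =>
  by_cases hn0 : n = 0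
  · subst hn0; exact h0
  obtain ⟨j, hj⟩ := Function.ne_iff.1 hn0
  obtain ⟨p, rfl⟩ := exists_eq_add_single hj
  obtain ⟨hp, hji⟩ := add_single_apply_eq_zero.1 hn
  have hsq : p + (Pi.single i 1 + Pi.single j 1) ≤ Pi.single i 1 + m := by
    rwa [add_comm (Pi.single i 1), ← add_assoc]
  exact (onE_eq_of_ccomp hC hl hm hji.symm hsq (IH p (lt_add_single p j) hp _)
    (hup (by simp) _)).2 h

theorem eq_of_restrictTo_eq (hC : Complete E C) (hl : CComp E C lam) (hm : CComp E C mu)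
    {h0} (h0 : lam.onE ⟨(0, i), h0⟩ = mu.onE ⟨(0, i), h0⟩)
    (hres : restrictTo lam (Pi.single i 1) m le_rfl = restrictTo mu (Pi.single i 1) m le_rfl) :
    lam = mu := by
  refine CGM.eq_of_onE_eq (funext fun ⟨(p, c), h⟩ => ?_)
    (lam.r_onE.symm.trans ((congrArg E.r h0).trans mu.r_onE))
  by_cases hp : p i = 0
  · by_cases hc : c = i
    · subst hc
      exact onE_eq_of_apply_eq_zero hC hl hm h0 (onE_eq_of_restrictTo_eq hres) hp h
    · have hpc : p + Pi.single c 1 ≤ m :=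
        le_of_le_single_add h (add_single_apply_eq_zero.2 ⟨hp, hc⟩)
      have hsq : p + (Pi.single i 1 + Pi.single c 1) ≤ Pi.single i 1 + m := by
        rw [add_left_comm]
        exact (add_le_add_iff_left _).2 hpc
      exact (onE_eq_of_ccomp hC hl hm (Ne.symm hc) hsq
        (onE_eq_of_apply_eq_zero hC hl hm h0 (onE_eq_of_restrictTo_eq hres) hp _)
        (onE_eq_of_restrictTo_eq hres (by simp) _)).1 h
  · exact onE_eq_of_restrictTo_eq hres hp h

end Uniqueness

theorem gRng_restrictTo_single {E : ColouredGraph k} {i : Fin k} {m : Fin k → ℕ}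
    {lam : CGM (grid k (Pi.single i 1 + m)) E} {e : E.E} {h}
    (he : lam.onE ⟨(0, i), h⟩ = e) :
    gRng (restrictTo lam (Pi.single i 1) m le_rfl) = E.s e := by
  rw [← he, lam.s_onE]
  exact lam.onV_congr (by simp)

theorem eq_of_traverses {E : ColouredGraph k} {C : Set (MorphOf E)} (hC : Complete E C)
    {x : List E.E} {lam mu : CGM (grid k (colourVec E x)) E} (hl : CComp E C lam)
    (hm : CComp E C mu) (htl : Traverses lam x) (htm : Traverses mu x)
    (h0 : gRng lam = gRng mu) : lam = mu := by
  induction x with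
  | nil => exact CGM.eq_of_onE_eq (funext fun p => (not_edge_grid_zero p).elim) h0
  | cons e x IH =>
    obtain ⟨⟨_, hle⟩, htl⟩ := (traverses_cons_iff e x lam).1 htl
    obtain ⟨⟨_, hme⟩, htm⟩ := (traverses_cons_iff e x mu).1 htm
    exact eq_of_restrictTo_eq hC hl hm (hle.trans hme.symm)
      (IH (ccomp_restrictTo hl _) (ccomp_restrictTo hm _) htl htm
        ((gRng_restrictTo_single hle).trans (gRng_restrictTo_single hme).symm))

section Extension

variable {E : ColouredGraph k} {C : Set (MorphOf E)} {m : Fin k → ℕ}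

open Classical in
noncomputable def crelPartner (C : Set (MorphOf E)) (u v : E.E) : E.E × E.E :=
  if h : ∃ q : E.E × E.E, CRel E C u v q.1 q.2 then h.choose else (v, u)

theorem crel_crelPartner (hC : Complete E C) {u v : E.E} (h1 : E.s u = E.r v)
    (h2 : E.c u ≠ E.c v) : CRel E C u v (crelPartner C u v).1 (crelPartner C u v).2 := by
  obtain ⟨f', e', h⟩ := exists_crel hC h1 h2
  have hex : ∃ q : E.E × E.E, CRel E C u v q.1 q.2 := ⟨(f', e'), h⟩
  rw [crelPartner, dif_pos hex]
  exact hex.choose_spec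

variable (C) (lam : CGM (grid k m) E) (e : E.E)

open Classical in
/-- For `n ≤ m` with `n (E.c e) = 0`: the edge of colour `E.c e` with source `lam` at `n`,
obtained by pushing `e` across the squares of `C` over `lam` along a chosen monotone path from `0`
to `n`. Elsewhere it is a junk value. -/
noncomputable def slabEdge : (Fin k → ℕ) → E.E :=
  wellFounded_lt.fix fun n IH =>
    if hn : n = 0 then e
    else
      let j := (Function.ne_iff.1 hn).choose
      if h : n - Pi.single j 1 + Pi.single j 1 ≤ m then
        (crelPartner C (IH _ (sub_single_lt (Function.ne_iff.1 hn).choose_spec))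
          (lam.onE ⟨(n - Pi.single j 1, j), h⟩)).2
      else e

open Classical in
noncomputable def slabSquare (n : Fin k → ℕ) (j : Fin k) : E.E × E.E :=
  if h : n + Pi.single j 1 ≤ m then crelPartner C (slabEdge C lam e n) (lam.onE ⟨(n, j), h⟩)
  else (e, e)

theorem slabEdge_zero : slabEdge C lam e 0 = e := by
  rw [slabEdge, WellFounded.fix_eq, dif_pos rfl]

theorem exists_slabEdge_eq {n : Fin k → ℕ} (hn : n ≠ 0) :
    ∃ p j, p + Pi.single j 1 = n ∧ slabEdge C lam e n = (slabSquare C lam e p j).2 := by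
  have hj := (Function.ne_iff.1 hn).choose_spec
  refine ⟨_, _, tsub_add_cancel_of_le (single_le_iff_ne_zero.2 hj), ?_⟩
  rw [slabEdge, WellFounded.fix_eq, dif_neg hn, slabSquare]
  dsimp only
  split_ifs <;> rfl

noncomputable def extendV (n : Fin k → ℕ) (hn : n ≤ Pi.single (E.c e) 1 + m) : E.V :=
  if n (E.c e) = 0 then E.r (slabEdge C lam e n)
  else lam.onV ⟨n - Pi.single (E.c e) 1, tsub_le_iff_left.2 hn⟩

noncomputable def extendE (p : Fin k → ℕ) (c : Fin k)
    (h : p + Pi.single c 1 ≤ Pi.single (E.c e) 1 + m) : E.E :=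
  if hp : p (E.c e) = 0 then
    if c = E.c e then slabEdge C lam e p else (slabSquare C lam e p c).1
  else lam.onE ⟨(p - Pi.single (E.c e) 1, c), sub_single_add_le hp h⟩

variable {C lam e}

theorem crel_slabSquare_of_composable (hC : Complete E C) {n : Fin k → ℕ} {j : Fin k}
    (h : n + Pi.single j 1 ≤ m) (hc : E.c (slabEdge C lam e n) ≠ j)
    (hs : E.s (slabEdge C lam e n) = lam.onV ⟨n, le_self_add.trans h⟩) :
    CRel E C (slabEdge C lam e n) (lam.onE ⟨(n, j), h⟩) (slabSquare C lam e n j).1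
      (slabSquare C lam e n j).2 := by
  rw [slabSquare, dif_pos h]
  exact crel_crelPartner hC (hs.trans lam.r_onE.symm) (by rwa [lam.c_onE])

theorem slabEdge_spec (hC : Complete E C) (he : E.s e = gRng lam) {n : Fin k → ℕ} (hn : n ≤ m)
    (hni : n (E.c e) = 0) :
    E.c (slabEdge C lam e n) = E.c e ∧ E.s (slabEdge C lam e n) = lam.onV ⟨n, hn⟩ := by
  induction n using WellFoundedLT.induction with
  | _ n IH =>
  by_cases hn0 : n = 0
  · subst hn0
    rw [slabEdge_zero]
    exact ⟨rfl, he⟩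
  obtain ⟨p, j, rfl, heq⟩ := exists_slabEdge_eq C lam e hn0
  obtain ⟨hpi, hji⟩ := add_single_apply_eq_zero.1 hni
  obtain ⟨hc, hs⟩ := IH p (lt_add_single p j) (le_self_add.trans hn) hpi
  have hrel := crel_slabSquare_of_composable hC hn (hc ▸ hji.symm) hs
  rw [heq]
  exact ⟨hrel.2.1.trans hc, hrel.s_eq.trans lam.s_onE⟩

theorem crel_slabSquare (hC : Complete E C) (he : E.s e = gRng lam) {n : Fin k → ℕ} {j : Fin k}
    (h : n + Pi.single j 1 ≤ m) (hn : n (E.c e) = 0) (hj : j ≠ E.c e) :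
    CRel E C (slabEdge C lam e n) (lam.onE ⟨(n, j), h⟩) (slabSquare C lam e n j).1
      (slabSquare C lam e n j).2 :=
  have hspec := slabEdge_spec hC he (le_self_add.trans h) hn
  crel_slabSquare_of_composable hC h (hspec.1 ▸ hj.symm) hspec.2

/-- Associativity for the unit cube at `p` spanned by `E.c e`, `j'` and `j`, whose top face is the
square of `lam` at `p`: pushing `slabEdge p` across the side faces in either order gives the same
edge, and the bottom face is `C`-related. -/
theorem slabSquare_hexagon (hC : Complete E C) (hA : Associative E C) (hcc : CComp E C lam)
    (he : E.s e = gRng lam) {p : Fin k → ℕ} {j j' : Fin k} (hp : p (E.c e) = 0)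
    (hj : j ≠ E.c e) (hj' : j' ≠ E.c e) (hjj : j' ≠ j)
    (h : p + (Pi.single j' 1 + Pi.single j 1) ≤ m)
    (hj'sq : (slabSquare C lam e p j').2 = slabEdge C lam e (p + Pi.single j' 1))
    (hjsq : (slabSquare C lam e p j).2 = slabEdge C lam e (p + Pi.single j 1)) :
    (slabSquare C lam e (p + Pi.single j' 1) j).2 =
        (slabSquare C lam e (p + Pi.single j 1) j').2 ∧
      CRel E C (slabSquare C lam e p j').1 (slabSquare C lam e (p + Pi.single j' 1) j).1
        (slabSquare C lam e p j).1 (slabSquare C lam e (p + Pi.single j 1) j').1 := by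
  have side₁ := crel_slabSquare hC he (square_fst_le h) hp hj'
  have side₂ := crel_slabSquare hC he (square_snd_le h) (add_single_apply_eq_zero.2 ⟨hp, hj'⟩) hj
  have top := squareCRel_of_ccomp hcc hjj h
  have side₃ := crel_slabSquare hC he (square_fst_le (square_comm_le h)) hp hj
  have side₄ := crel_slabSquare hC he (square_snd_le (square_comm_le h))
    (add_single_apply_eq_zero.2 ⟨hp, hj⟩) hj'
  rw [hj'sq] at side₁
  rw [hjsq] at side₃
  have bottom := crel_crelPartner hC (side₁.s_eq_r.trans side₂.r_eq.symm)
    (by rw [side₁.1, side₂.1, lam.c_onE, lam.c_onE]; exact hjj)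
  have hc := (slabEdge_spec hC he (le_self_add.trans (square_fst_le h)) hp).1
  obtain ⟨hf, hg, hh⟩ := hA _ _ _ _ _ _ _ _ _ _ _ _ _ _ _ side₁.s_eq_r_left
    lam.s_onE_eq_r_onE (by rw [hc, lam.c_onE]; exact hj'.symm) (by simp only [CGM.c_onE]; exact hjj)
    (by rw [hc, lam.c_onE]; exact hj.symm) side₁ side₂ bottom top side₃ side₄
  rw [← hg, ← hh] at bottom
  exact ⟨hf.symm, bottom⟩

theorem slabSquare_snd (hC : Complete E C) (hA : Associative E C) (hcc : CComp E C lam)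
    (he : E.s e = gRng lam) {n : Fin k → ℕ} {j : Fin k} (hn : n (E.c e) = 0) (hj : j ≠ E.c e)
    (h : n + Pi.single j 1 ≤ m) :
    (slabSquare C lam e n j).2 = slabEdge C lam e (n + Pi.single j 1) := by
  induction n using WellFoundedLT.induction generalizing j with
  | _ n IH =>
  obtain ⟨p, j', hp, heq⟩ := exists_slabEdge_eq C lam e (add_single_ne_zero n j)
  rw [heq]
  by_cases hjj : j' = j
  · subst hjj
    obtain rfl := add_right_cancel hp
    rfl
  have hnj' : n j' ≠ 0 := by
    have := congrFun hp j'
    simp only [Pi.add_apply, Pi.single_eq_same, Pi.single_eq_of_ne hjj] at this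
    omega
  obtain ⟨q, rfl⟩ := exists_eq_add_single hnj'
  obtain rfl : p = q + Pi.single j 1 := add_right_cancel (hp.trans (add_right_comm _ _ _))
  obtain ⟨hq, hj'⟩ := add_single_apply_eq_zero.1 hn
  have hsq : q + (Pi.single j' 1 + Pi.single j 1) ≤ m := by rwa [← add_assoc]
  exact (slabSquare_hexagon hC hA hcc he hq hj hj' hjj hsq
    (IH q (lt_add_single q j') hq hj' (square_fst_le hsq))
    (IH q (lt_add_single q j') hq hj (square_fst_le (square_comm_le hsq)))).1

theorem crel_slabSquare_slabSquare (hC : Complete E C) (hA : Associative E C)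
    (hcc : CComp E C lam) (he : E.s e = gRng lam) {p : Fin k → ℕ} {j j' : Fin k}
    (hp : p (E.c e) = 0) (hj : j ≠ E.c e) (hj' : j' ≠ E.c e) (hjj : j' ≠ j)
    (h : p + (Pi.single j' 1 + Pi.single j 1) ≤ m) :
    CRel E C (slabSquare C lam e p j').1 (slabSquare C lam e (p + Pi.single j' 1) j).1
      (slabSquare C lam e p j).1 (slabSquare C lam e (p + Pi.single j 1) j').1 :=
  (slabSquare_hexagon hC hA hcc he hp hj hj' hjj h
    (slabSquare_snd hC hA hcc he hp hj' (square_fst_le h))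
    (slabSquare_snd hC hA hcc he hp hj (square_fst_le (square_comm_le h)))).2

theorem crel_slabEdge_add_single (hC : Complete E C) (hA : Associative E C)
    (hcc : CComp E C lam) (he : E.s e = gRng lam) {n : Fin k → ℕ} {j : Fin k}
    (h : n + Pi.single j 1 ≤ m) (hn : n (E.c e) = 0) (hj : j ≠ E.c e) :
    CRel E C (slabEdge C lam e n) (lam.onE ⟨(n, j), h⟩) (slabSquare C lam e n j).1
      (slabEdge C lam e (n + Pi.single j 1)) :=
  slabSquare_snd hC hA hcc he hn hj h ▸ crel_slabSquare hC he h hn hj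

section

variable {p : Fin k → ℕ} {c : Fin k} {h : p + Pi.single c 1 ≤ Pi.single (E.c e) 1 + m}

theorem extendE_c (hC : Complete E C) (he : E.s e = gRng lam) :
    E.c (extendE C lam e p c h) = c := by
  unfold extendE
  split_ifs with hp hc
  · exact hc ▸ (slabEdge_spec hC he (le_of_le_single_add (le_self_add.trans h) hp) hp).1
  · have hpc := le_of_le_single_add h (add_single_apply_eq_zero.2 ⟨hp, hc⟩)
    exact (crel_slabSquare hC he hpc hp hc).1.trans lam.c_onE
  · exact lam.c_onE

theorem extendE_r (hC : Complete E C) (he : E.s e = gRng lam) :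
    E.r (extendE C lam e p c h) = extendV C lam e p (le_self_add.trans h) := by
  unfold extendE extendV
  split_ifs with hp hc
  · rfl
  · have hpc := le_of_le_single_add h (add_single_apply_eq_zero.2 ⟨hp, hc⟩)
    exact (crel_slabSquare hC he hpc hp hc).r_eq
  · exact lam.r_onE

theorem extendE_s (hC : Complete E C) (hA : Associative E C) (hcc : CComp E C lam)
    (he : E.s e = gRng lam) :
    E.s (extendE C lam e p c h) = extendV C lam e (p + Pi.single c 1) h := by
  by_cases hp : p (E.c e) = 0
  · by_cases hc : c = E.c e
    · subst hc
      have hq : (p + Pi.single (E.c e) 1 : Fin k → ℕ) (E.c e) ≠ 0 := by simp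
      rw [extendE, dif_pos hp, if_pos rfl, extendV, if_neg hq,
        (slabEdge_spec hC he (le_of_le_single_add (le_self_add.trans h) hp) hp).2]
      exact lam.onV_congr (add_tsub_cancel_right _ _).symm
    · have hq := add_single_apply_eq_zero.2 ⟨hp, hc⟩
      have hpc := le_of_le_single_add h hq
      rw [extendE, dif_pos hp, if_neg hc, extendV, if_pos hq,
        (crel_slabSquare hC he hpc hp hc).s_eq_r, slabSquare_snd hC hA hcc he hp hc hpc]
  · have hq : (p + Pi.single c 1 : Fin k → ℕ) (E.c e) ≠ 0 := by simp [hp]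
    rw [extendE, dif_neg hp, extendV, if_neg hq]
    exact lam.s_onE.trans (lam.onV_congr (tsub_add_eq_add_tsub (single_le_iff_ne_zero.2 hp)))

end

noncomputable def extend (hC : Complete E C) (hA : Associative E C) (hcc : CComp E C lam)
    (he : E.s e = gRng lam) : CGM (grid k (Pi.single (E.c e) 1 + m)) E where
  onV n := extendV C lam e n.1 n.2
  onE p := extendE C lam e p.1.1 p.1.2 p.2
  r_comm _ := extendE_r hC he
  s_comm _ := extendE_s hC hA hcc he
  c_comm _ := extendE_c hC he

variable (hC : Complete E C) (hA : Associative E C) (hcc : CComp E C lam) (he : E.s e = gRng lam)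
  {p : Fin k → ℕ} {c : Fin k}

theorem extend_onE_zero {h} : (extend hC hA hcc he).onE ⟨(0, E.c e), h⟩ = e := by
  change extendE C lam e 0 (E.c e) h = e
  rw [extendE, dif_pos (Pi.zero_apply _), if_pos rfl, slabEdge_zero]

theorem restrictTo_extend :
    restrictTo (extend hC hA hcc he) (Pi.single (E.c e) 1) m le_rfl = lam := by
  have hq : ∀ q : Fin k → ℕ, (Pi.single (E.c e) 1 + q : Fin k → ℕ) (E.c e) ≠ 0 :=
    fun q => by simp
  refine CGM.eq_of_onE_eq (funext fun ⟨(q, c), h⟩ => ?_) ?_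
  · dsimp only [restrictTo, extend]
    rw [extendE, dif_neg (hq q)]
    exact lam.onE_congr (add_tsub_cancel_left _ _) rfl
  · dsimp only [gRng, restrictTo, extend]
    rw [extendV, if_neg (hq 0)]
    exact lam.onV_congr (add_tsub_cancel_left _ _)

theorem extend_onE_self (hp : p (E.c e) = 0) {h} :
    (extend hC hA hcc he).onE ⟨(p, E.c e), h⟩ = slabEdge C lam e p := by
  change extendE C lam e p (E.c e) h = _
  rw [extendE, dif_pos hp, if_pos rfl]

theorem extend_onE_of_ne (hp : p (E.c e) = 0) (hc : c ≠ E.c e) {h} :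
    (extend hC hA hcc he).onE ⟨(p, c), h⟩ = (slabSquare C lam e p c).1 := by
  change extendE C lam e p c h = _
  rw [extendE, dif_pos hp, if_neg hc]

theorem extend_onE_add_single {h} (h' : p + Pi.single c 1 ≤ m) :
    (extend hC hA hcc he).onE ⟨(p + Pi.single (E.c e) 1, c), h⟩ = lam.onE ⟨(p, c), h'⟩ := by
  change extendE C lam e _ c h = _
  rw [extendE, dif_neg (by simp)]
  exact lam.onE_congr (add_tsub_cancel_right _ _) rfl

theorem squareCRel_extend {q : Fin k → ℕ} {a b : Fin k} (hab : a ≠ b)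
    (h : q + (Pi.single a 1 + Pi.single b 1) ≤ Pi.single (E.c e) 1 + m) (hq : q (E.c e) = 0) :
    SquareCRel C (extend hC hA hcc he) q a b h := by
  unfold SquareCRel
  rcases eq_or_ne a (E.c e) with rfl | ha
  · have hb := hab.symm
    have hqb : q + Pi.single b 1 ≤ m := le_of_add_le_add_left (by rwa [add_left_comm] at h)
    rw [extend_onE_self hC hA hcc he hq, extend_onE_add_single hC hA hcc he hqb,
      extend_onE_of_ne hC hA hcc he hq hb,
      extend_onE_self hC hA hcc he (add_single_apply_eq_zero.2 ⟨hq, hb⟩)]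
    exact crel_slabEdge_add_single hC hA hcc he hqb hq hb
  rcases eq_or_ne b (E.c e) with rfl | hb
  · have hqa : q + Pi.single a 1 ≤ m :=
      le_of_add_le_add_left (by rwa [add_comm (Pi.single a 1), add_left_comm] at h)
    rw [extend_onE_of_ne hC hA hcc he hq ha,
      extend_onE_self hC hA hcc he (add_single_apply_eq_zero.2 ⟨hq, ha⟩),
      extend_onE_self hC hA hcc he hq, extend_onE_add_single hC hA hcc he hqa]
    exact (crel_slabEdge_add_single hC hA hcc he hqa hq ha).symm
  have hqab : q + (Pi.single a 1 + Pi.single b 1) ≤ m :=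
    le_of_le_single_add h (by simp [Pi.single_eq_of_ne ha.symm, Pi.single_eq_of_ne hb.symm, hq])
  rw [extend_onE_of_ne hC hA hcc he hq ha,
    extend_onE_of_ne hC hA hcc he (add_single_apply_eq_zero.2 ⟨hq, ha⟩) hb,
    extend_onE_of_ne hC hA hcc he hq hb,
    extend_onE_of_ne hC hA hcc he (add_single_apply_eq_zero.2 ⟨hq, hb⟩) ha]
  exact crel_slabSquare_slabSquare hC hA hcc he hq hb ha hab hqab

theorem ccomp_extend : CComp E C (extend hC hA hcc he) := by
  intro q a b hab h
  by_cases hq : q (E.c e) = 0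
  · exact restrictTo_mem_of_squareCRel hab h (squareCRel_extend hC hA hcc he hab h hq)
  obtain ⟨q, rfl⟩ := exists_eq_single_add hq
  have h' : q + (Pi.single a 1 + Pi.single b 1) ≤ m :=
    le_of_add_le_add_left (by rwa [← add_assoc])
  have := hcc q a b hab h'
  rwa [← restrictTo_extend hC hA hcc he, restrictTo_restrictTo] at this

end Extension

theorem exists_ccomp_traverses {E : ColouredGraph k} {C : Set (MorphOf E)} (hC : Complete E C)
    (hA : Associative E C) {x : List E.E} (hx : x.IsChain (fun e f => E.s e = E.r f)) (v : E.V)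
    (hv : ∀ e ∈ x.head?, E.r e = v) :
    ∃ lam : CGM (grid k (colourVec E x)) E,
      CComp E C lam ∧ Traverses lam x ∧ gRng lam = v := by
  induction x generalizing v with
  | nil =>
    refine ⟨⟨fun _ => v, fun p => (not_edge_grid_zero p).elim,
      fun p => (not_edge_grid_zero p).elim, fun p => (not_edge_grid_zero p).elim,
      fun p => (not_edge_grid_zero p).elim⟩,
      fun q a b _ h => (not_edge_grid_zero ⟨(q, a), square_fst_le h⟩).elim,
      ⟨rfl, fun l hl => absurd hl (Nat.not_lt_zero l)⟩, rfl⟩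
  | cons e x IH =>
    obtain ⟨lam, hcc, ht, hr⟩ := IH (List.isChain_cons.1 hx).2 (E.s e)
      fun f hf => ((List.isChain_cons.1 hx).1 f hf).symm
    have he := extend_onE_zero hC hA hcc hr.symm (h := (zero_add _).trans_le le_self_add)
    have ht' := (traverses_cons_iff e x _).2
      ⟨⟨_, he⟩, (restrictTo_extend hC hA hcc hr.symm).symm ▸ ht⟩
    exact ⟨_, ccomp_extend hC hA hcc hr.symm, ht',
      (extend hC hA hcc hr.symm).r_onE.symm.trans ((congrArg E.r he).trans (hv e rfl))⟩

/-- Every finite path in `E` traverses a unique `C`-compatible coloured-graph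
morphism `λ_x : E_{k,q(c(x))} → E`. -/
theorem path_traverses_unique_morphism {k : ℕ} {E : ColouredGraph k}
    {C : Set (MorphOf E)} (hC : Complete E C) (hA : Associative E C)
    (x : FinPath E) :
    ∃! lam : CGM (grid k (colourVec E x.edges)) E,
      CComp E C lam ∧ Traverses lam x.edges ∧ gRng lam = x.rng := by
  obtain ⟨lam, hlam⟩ := exists_ccomp_traverses hC hA x.chain x.rng x.head_rng
  exact ⟨lam, hlam, fun mu ⟨hm, htm, hrm⟩ =>
    eq_of_traverses hC hm hlam.1 htm hlam.2.1 (hrm.trans hlam.2.2.symm)⟩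

end Paper
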